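/- Let (𝔻, d) be a metric space, x ∈ 𝔻 a fixed point regarded as a constant random variable, and X_n^θ : Ω → 𝔻 (θ ∈ Θ, n ∈ ℕ) Borel-measurable maps. Then sup_{θ∈Θ} d_BL(X_n^θ, x) → 0 as n → ∞ if and only if for every ε > 0, sup_{θ∈Θ} ℙ( d(X_n^θ, x) > ε ) → 0 as n → ∞. -/

import Mathlib

open MeasureTheory Filter Topology

/-- The bounded Lipschitz distance between (the laws of) two `𝔻`-valued random variables:
the supremum of `|E f(X) − E f(Y)|` over all `f : 𝔻 → ℝ` bounded by `1` and `1`-Lipschitz. -/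
noncomputable def dBL {Ω 𝔻 : Type*} [MeasurableSpace Ω] (P : Measure Ω)
    [PseudoMetricSpace 𝔻] (X Y : Ω → 𝔻) : ℝ :=
  ⨆ f : {f : 𝔻 → ℝ // (∀ x, |f x| ≤ 1) ∧ LipschitzWith 1 f},
    |(∫ ω, f.1 (X ω) ∂P) - ∫ ω, f.1 (Y ω) ∂P|

/-!
Both directions compare `dBL(X, x)` with `P(d(X, x) > ε)` uniformly in `X`. Testing against the
bounded Lipschitz function `min (d(·, x)) 1` and applying Markov's inequality gives
`min ε 1 · P(d(X, x) > ε) ≤ dBL(X, x)`. Conversely, a function bounded by `1` and `1`-Lipschitz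
moves by at most `ε` where `d(X, x) ≤ ε` and by at most `2` elsewhere, so
`dBL(X, x) ≤ ε + 2 P(d(X, x) > ε)`.
-/

section BoundedLipschitz

variable {Ω 𝔻 : Type*} [MeasurableSpace Ω] {P : Measure Ω}

lemma abs_integral_comp_sub_le_two [IsProbabilityMeasure P] {f : 𝔻 → ℝ} (hf : ∀ y, |f y| ≤ 1)
    (X Y : Ω → 𝔻) : |∫ ω, f (X ω) ∂P - ∫ ω, f (Y ω) ∂P| ≤ 2 := by
  have hbound (Z : Ω → 𝔻) : |∫ ω, f (Z ω) ∂P| ≤ 1 := by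
    simpa using norm_integral_le_of_norm_le_const (μ := P) (C := 1)
      (ae_of_all _ fun ω => (Real.norm_eq_abs _).trans_le (hf (Z ω)))
  calc |∫ ω, f (X ω) ∂P - ∫ ω, f (Y ω) ∂P|
      ≤ |∫ ω, f (X ω) ∂P| + |∫ ω, f (Y ω) ∂P| := abs_sub _ _
    _ ≤ 2 := by linarith [hbound X, hbound Y]

variable [PseudoMetricSpace 𝔻]

lemma dBL_nonneg (X Y : Ω → 𝔻) : 0 ≤ dBL P X Y :=
  Real.iSup_nonneg fun _ => abs_nonneg _

variable [IsProbabilityMeasure P]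

lemma dBL_le_two (X Y : Ω → 𝔻) : dBL P X Y ≤ 2 :=
  Real.iSup_le (fun f => abs_integral_comp_sub_le_two f.2.1 X Y) zero_le_two

lemma abs_integral_comp_sub_le_dBL {f : 𝔻 → ℝ} (hf : ∀ y, |f y| ≤ 1) (hf' : LipschitzWith 1 f)
    (X Y : Ω → 𝔻) : |∫ ω, f (X ω) ∂P - ∫ ω, f (Y ω) ∂P| ≤ dBL P X Y :=
  le_ciSup (f := fun g : {g : 𝔻 → ℝ // (∀ y, |g y| ≤ 1) ∧ LipschitzWith 1 g} =>
      |∫ ω, g.1 (X ω) ∂P - ∫ ω, g.1 (Y ω) ∂P|)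
    ⟨2, by rintro _ ⟨g, rfl⟩; exact abs_integral_comp_sub_le_two g.2.1 X Y⟩ ⟨f, hf, hf'⟩

variable [MeasurableSpace 𝔻] [OpensMeasurableSpace 𝔻] {X : Ω → 𝔻}

lemma min_mul_measureReal_le_dBL (hX : Measurable X) (x : 𝔻) {ε : ℝ} (hε : 0 ≤ ε) :
    min ε 1 * P.real {ω | ε < dist (X ω) x} ≤ dBL P X fun _ => x := by
  set g : 𝔻 → ℝ := fun y => min (dist y x) 1
  have hg_nonneg (y : 𝔻) : 0 ≤ g y := le_min dist_nonneg zero_le_one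
  have hg_abs (y : 𝔻) : |g y| ≤ 1 := (abs_of_nonneg (hg_nonneg y)).trans_le (min_le_right _ _)
  have hg_lip : LipschitzWith 1 g := (LipschitzWith.dist_left x).min_const 1
  have hg_int : Integrable (fun ω => g (X ω)) P :=
    .of_bound (hg_lip.continuous.measurable.comp hX).aestronglyMeasurable 1
      (ae_of_all _ fun ω => hg_abs (X ω))
  calc min ε 1 * P.real {ω | ε < dist (X ω) x}
      ≤ min ε 1 * P.real {ω | min ε 1 ≤ g (X ω)} := by
        have hm : 0 ≤ min ε 1 := le_min hε zero_le_one
        exact mul_le_mul_of_nonneg_left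
          (measureReal_mono fun ω (hω : ε < dist (X ω) x) => min_le_min_right 1 hω.le) hm
    _ ≤ ∫ ω, g (X ω) ∂P :=
        mul_meas_ge_le_integral_of_nonneg (ae_of_all _ fun ω => hg_nonneg _) hg_int _
    _ = |∫ ω, g (X ω) ∂P - ∫ _, g x ∂P| := by
        have hint_nonneg : 0 ≤ ∫ ω, g (X ω) ∂P := integral_nonneg fun ω => hg_nonneg (X ω)
        rw [integral_const, show g x = 0 by simp [g], smul_zero, sub_zero,
          abs_of_nonneg hint_nonneg]
    _ ≤ dBL P X fun _ => x := abs_integral_comp_sub_le_dBL hg_abs hg_lip X _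

lemma dBL_le_add_two_mul_measureReal (hX : Measurable X) (x : 𝔻) {ε : ℝ} (hε : 0 ≤ ε) :
    dBL P X (fun _ => x) ≤ ε + 2 * P.real {ω | ε < dist (X ω) x} := by
  set A := {ω | ε < dist (X ω) x}
  have hA : MeasurableSet A :=
    ((LipschitzWith.dist_left x).continuous.measurable.comp hX) measurableSet_Ioi
  refine Real.iSup_le (fun f => ?_) (by positivity)
  obtain ⟨f, hf, hf'⟩ := f
  have hf_int : Integrable (fun ω => f (X ω)) P :=
    .of_bound (hf'.continuous.measurable.comp hX).aestronglyMeasurable 1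
      (ae_of_all _ fun ω => hf (X ω))
  have hpointwise (ω : Ω) : |f (X ω) - f x| ≤ ε + A.indicator (fun _ => 2) ω := by
    by_cases hω : ω ∈ A
    · rw [Set.indicator_of_mem hω]
      linarith [abs_sub (f (X ω)) (f x), hf (X ω), hf x]
    · rw [Set.indicator_of_notMem hω, add_zero]
      calc |f (X ω) - f x| ≤ dist (X ω) x := by
            simpa [Real.dist_eq] using hf'.dist_le_mul (X ω) x
        _ ≤ ε := not_lt.mp hω
  calc |∫ ω, f (X ω) ∂P - ∫ _, f x ∂P| = |∫ ω, (f (X ω) - f x) ∂P| := by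
        rw [integral_sub hf_int (integrable_const _)]
    _ ≤ ∫ ω, |f (X ω) - f x| ∂P := abs_integral_le_integral_abs
    _ ≤ ∫ ω, (ε + A.indicator (fun _ => 2) ω) ∂P :=
        integral_mono (hf_int.sub (integrable_const _)).abs
          ((integrable_const ε).add ((integrable_const 2).indicator hA)) hpointwise
    _ = ε + 2 * P.real A := by
        rw [integral_add (integrable_const ε) ((integrable_const 2).indicator hA),
          integral_indicator_const _ hA]
        simp [mul_comm]

end BoundedLipschitz

section UniformConvergence

variable {Ω 𝔻 Θ ι : Type*} [MeasurableSpace Ω] {P : Measure Ω} [IsProbabilityMeasure P]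
  [PseudoMetricSpace 𝔻] [MeasurableSpace 𝔻] [OpensMeasurableSpace 𝔻] {l : Filter ι}
  {X : ι → Θ → Ω → 𝔻}

theorem tendsto_iSup_measure_of_tendsto_iSup_dBL (hX : ∀ n θ, Measurable (X n θ)) (x : 𝔻)
    (h : Tendsto (fun n => ⨆ θ, dBL P (X n θ) fun _ => x) l (𝓝 0)) {ε : ℝ} (hε : 0 < ε) :
    Tendsto (fun n => ⨆ θ, P {ω | ε < dist (X n θ ω) x}) l (𝓝 0) := by
  have hm : 0 < min ε 1 := lt_min hε one_pos
  have hbound (n : ι) : ⨆ θ, P {ω | ε < dist (X n θ ω) x}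
      ≤ ENNReal.ofReal ((⨆ θ, dBL P (X n θ) fun _ => x) / min ε 1) := by
    refine iSup_le fun θ => ?_
    rw [← ofReal_measureReal]
    refine ENNReal.ofReal_le_ofReal ((le_div_iff₀ hm).2 ?_)
    rw [mul_comm]
    have hbdd : BddAbove (Set.range fun θ => dBL P (X n θ) fun _ => x) :=
      ⟨2, by rintro _ ⟨θ', rfl⟩; exact dBL_le_two _ _⟩
    exact (min_mul_measureReal_le_dBL (hX n θ) x hε.le).trans (le_ciSup hbdd θ)
  have hupper : Tendsto (fun n => ENNReal.ofReal ((⨆ θ, dBL P (X n θ) fun _ => x) / min ε 1))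
      l (𝓝 0) := by
    simpa using ENNReal.tendsto_ofReal (h.div_const (min ε 1))
  exact tendsto_of_tendsto_of_tendsto_of_le_of_le tendsto_const_nhds hupper (fun _ => zero_le)
    hbound

theorem tendsto_iSup_dBL_of_tendsto_iSup_measure (hX : ∀ n θ, Measurable (X n θ)) (x : 𝔻)
    (h : ∀ ε > (0 : ℝ), Tendsto (fun n => ⨆ θ, P {ω | ε < dist (X n θ ω) x}) l (𝓝 0)) :
    Tendsto (fun n => ⨆ θ, dBL P (X n θ) fun _ => x) l (𝓝 0) := by
  refine tendsto_order.2 ⟨fun a ha => .of_forall fun n =>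
    ha.trans_le (Real.iSup_nonneg fun θ => dBL_nonneg _ _), fun δ hδ => ?_⟩
  set M : ι → ENNReal := fun n => ⨆ θ, P {ω | δ / 2 < dist (X n θ ω) x}
  have hM_ne_top (n : ι) : M n ≠ ⊤ :=
    ((iSup_le fun _ => prob_le_one).trans_lt ENNReal.one_lt_top).ne
  have hM : Tendsto (fun n => (M n).toReal) l (𝓝 0) := by
    have := (ENNReal.tendsto_toReal ENNReal.zero_ne_top).comp (h (δ / 2) (by positivity))
    rwa [ENNReal.toReal_zero] at this
  filter_upwards [hM.eventually (gt_mem_nhds (show (0 : ℝ) < δ / 4 by positivity))] with n hn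
  calc ⨆ θ, dBL P (X n θ) (fun _ => x) ≤ δ / 2 + 2 * (M n).toReal :=
        Real.iSup_le (fun θ =>
          (dBL_le_add_two_mul_measureReal (hX n θ) x (ε := δ / 2) (by positivity)).trans
            (by gcongr; exact ENNReal.toReal_mono (hM_ne_top n) (le_iSup_of_le θ le_rfl)))
          (by positivity)
    _ < δ := by linarith

end UniformConvergence

theorem dBL_const_iff_prob_general
    {Ω 𝔻 Θ : Type*} [MeasurableSpace Ω] (P : Measure Ω) [IsProbabilityMeasure P]
    [MetricSpace 𝔻] [MeasurableSpace 𝔻] [BorelSpace 𝔻]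
    (x : 𝔻) (Xn : ℕ → Θ → Ω → 𝔻) (hXn : ∀ n θ, Measurable (Xn n θ)) :
    Tendsto (fun n => ⨆ θ, dBL P (Xn n θ) fun _ => x) atTop (𝓝 0) ↔
      ∀ ε > (0 : ℝ),
        Tendsto (fun n => ⨆ θ, P {ω | ε < dist (Xn n θ ω) x}) atTop (𝓝 0) :=
  ⟨fun h _ hε => tendsto_iSup_measure_of_tendsto_iSup_dBL hXn x h hε,
    tendsto_iSup_dBL_of_tendsto_iSup_measure hXn x⟩

/-- Uniform convergence in distribution to a constant is equivalent to uniform convergence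
in probability to that constant. -/
theorem dBL_const_iff_prob
    {Ω 𝔻 Θ : Type*} [MeasurableSpace Ω] (P : Measure Ω) [IsProbabilityMeasure P]
    [MetricSpace 𝔻] [MeasurableSpace 𝔻] [BorelSpace 𝔻] [Nonempty Θ]
    (x : 𝔻) (Xn : ℕ → Θ → Ω → 𝔻) (hXn : ∀ n θ, Measurable (Xn n θ)) :
    Tendsto (fun n => ⨆ θ, dBL P (Xn n θ) fun _ => x) atTop (𝓝 0) ↔
      ∀ ε > (0 : ℝ),
        Tendsto (fun n => ⨆ θ, P {ω | ε < dist (Xn n θ ω) x}) atTop (𝓝 0) :=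
  dBL_const_iff_prob_general P x Xn hXn
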